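/- Let x ∈ ℝ^{n+1} and let T = {j ∈ S : l_{v,j}(x) = F_v(x)}. Then for every b ∈ (ℂ∖{0})^{n+1} and every α ∈ {1,…,n+1}, along the ray z(t) one has lim_{t→+∞} t^{−F_v(x)} · z(t)_α · ∂f_t/∂z_α(z(t)) = Σ_{j∈T} j_α b^j. -/

import Mathlib

open Filter Topology Finset

/-! Multiplying by `z_α` turns `∂/∂z_α` into the Euler operator, which sends the monomial `z^j` to
`j_α z^j`. On the ray `z(t)` the monomial `t^{-v(j)} z(t)^j` equals `t^{⟨j, x⟩ - v(j)} b^j`, so after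
rescaling by `t^{-F_v(x)}` the `j`-th term carries the factor `t^{l_{v,j}(x) - F_v(x)}`, whose
exponent is `≤ 0` and vanishes exactly for `j ∈ T`. -/

section Monomial

variable {K ι : Type*} [Field K] [Fintype ι]

theorem mul_prod_zpow_eq_zero {z : ι → K} {α : ι} (j : ι → ℤ) (hz : z α = 0) :
    (j α : K) * ∏ β, z β ^ j β = 0 := by
  rcases eq_or_ne (j α) 0 with hj | hj
  · simp [hj]
  · exact mul_eq_zero_of_right _ (prod_eq_zero (mem_univ α) (by simp [hz, zero_zpow _ hj]))

variable [DecidableEq ι]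

theorem prod_update_zpow (z : ι → K) (α : ι) (w : K) (j : ι → ℤ) :
    ∏ β, Function.update z α w β ^ j β = w ^ j α * ∏ β ∈ univ.erase α, z β ^ j β := by
  have : (fun β => Function.update z α w β ^ j β) =
      Function.update (fun β => z β ^ j β) α (w ^ j α) := by
    ext β
    rcases eq_or_ne β α with rfl | h
    · simp
    · simp [Function.update_of_ne h]
  rw [this, prod_update_of_mem (mem_univ α), sdiff_singleton_eq_erase]

theorem mul_zpow_sub_one_mul_prod_erase {z : ι → K} {α : ι} (j : ι → ℤ) (hz : z α ≠ 0) :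
    z α * (z α ^ (j α - 1) * ∏ β ∈ univ.erase α, z β ^ j β) = ∏ β, z β ^ j β := by
  rw [← mul_assoc, ← zpow_one_add₀ hz, add_sub_cancel, mul_prod_erase univ (fun β => z β ^ j β)
    (mem_univ α)]

end Monomial

section Euler

variable {𝕜 ι : Type*} [NontriviallyNormedField 𝕜] [Fintype ι] [DecidableEq ι]

theorem hasDerivAt_prod_update_zpow {z : ι → 𝕜} {α : ι} (j : ι → ℤ) (hz : z α ≠ 0) :
    HasDerivAt (fun w => ∏ β, Function.update z α w β ^ j β)
      (j α * z α ^ (j α - 1) * ∏ β ∈ univ.erase α, z β ^ j β) (z α) := by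
  simp only [prod_update_zpow]
  exact (hasDerivAt_zpow (j α) (z α) (Or.inl hz)).mul_const _

/-- At `z α = 0` the derivative may be a junk value, but both sides vanish there. -/
theorem mul_deriv_sum_prod_update_zpow (S : Finset (ι → ℤ)) (c : (ι → ℤ) → 𝕜) (z : ι → 𝕜)
    (α : ι) :
    z α * deriv (fun w => ∑ j ∈ S, c j * ∏ β, Function.update z α w β ^ j β) (z α) =
      ∑ j ∈ S, c j * (j α * ∏ β, z β ^ j β) := by
  by_cases hz : z α = 0
  · simp [hz, mul_prod_zpow_eq_zero _ hz]
  have hderiv := HasDerivAt.fun_sum (u := S) fun j _ =>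
    (hasDerivAt_prod_update_zpow j hz).const_mul (c j)
  rw [hderiv.deriv, mul_sum]
  refine sum_congr rfl fun j _ => ?_
  linear_combination (c j * j α) * mul_zpow_sub_one_mul_prod_erase j hz

end Euler

theorem prod_ofReal_rpow_mul_zpow {ι : Type*} [Fintype ι] {t : ℝ} (ht : 0 < t) (x : ι → ℝ)
    (b : ι → ℂ) (j : ι → ℤ) :
    ∏ β, (((t ^ x β : ℝ) : ℂ) * b β) ^ j β =
      ((t ^ ∑ β, (j β : ℝ) * x β : ℝ) : ℂ) * ∏ β, b β ^ j β := by
  rw [Real.rpow_sum_of_pos ht, Complex.ofReal_prod, ← prod_mul_distrib]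
  refine prod_congr rfl fun β _ => ?_
  rw [mul_zpow, ← Complex.ofReal_zpow, ← Real.rpow_intCast, ← Real.rpow_mul ht.le, mul_comm (x β)]

theorem tendsto_rpow_atTop_of_nonpos {e : ℝ} (he : e ≤ 0) :
    Tendsto (fun t : ℝ => t ^ e) atTop (𝓝 (if e = 0 then 1 else 0)) := by
  split_ifs with h
  · simp [h]
  · simpa using tendsto_rpow_neg_atTop (neg_pos.2 (lt_of_le_of_ne he h))

theorem tendsto_sum_rpow_smul {ι E : Type*} [NormedAddCommGroup E] [NormedSpace ℝ E]
    (S : Finset ι) (e : ι → ℝ) (a : ι → E) (he : ∀ j ∈ S, e j ≤ 0) :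
    Tendsto (fun t : ℝ => ∑ j ∈ S, t ^ e j • a j) atTop (𝓝 (∑ j ∈ S with e j = 0, a j)) := by
  rw [sum_filter]
  refine tendsto_finsetSum S fun j hj => ?_
  convert (tendsto_rpow_atTop_of_nonpos (he j hj)).smul_const (a j) using 2
  split_ifs <;> simp

theorem rescaled_log_derivative_limit_general (n : ℕ)
    (S : Finset (Fin (n + 1) → ℤ)) (hS : S.Nonempty)
    (v : (Fin (n + 1) → ℤ) → ℝ)
    (l : (Fin (n + 1) → ℤ) → (Fin (n + 1) → ℝ) → ℝ)
    (hl : ∀ j x, l j x = ∑ α, (j α : ℝ) * x α - v j)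
    (F : (Fin (n + 1) → ℝ) → ℝ)
    (hF : ∀ x, F x = S.sup' hS (fun j => l j x))
    (f : ℝ → (Fin (n + 1) → ℂ) → ℂ)
    (hf : ∀ t z, f t z = ∑ j ∈ S, ((t ^ (-(v j)) : ℝ) : ℂ) * ∏ α, z α ^ (j α))
    (pd : ℝ → Fin (n + 1) → (Fin (n + 1) → ℂ) → ℂ)
    (hpd : ∀ t α z, pd t α z = deriv (fun w => f t (Function.update z α w)) (z α))
    (x : Fin (n + 1) → ℝ)
    (T : Finset (Fin (n + 1) → ℤ))
    (hT : ∀ j, j ∈ T ↔ j ∈ S ∧ l j x = F x)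
    (b : Fin (n + 1) → ℂ)
    (zr : ℝ → Fin (n + 1) → ℂ)
    (hz : ∀ t α, zr t α = ((t ^ (x α) : ℝ) : ℂ) * b α)
    (α : Fin (n + 1)) :
    Tendsto (fun t : ℝ => ((t ^ (-(F x)) : ℝ) : ℂ) * (zr t α * pd t α (zr t))) atTop
      (nhds (∑ j ∈ T, (j α : ℂ) * ∏ β, b β ^ (j β))) := by
  have hT_eq : T = S.filter fun j => l j x - F x = 0 := by
    ext j
    simp [hT, sub_eq_zero]
  have hle : ∀ j ∈ S, l j x - F x ≤ 0 := fun j hj =>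
    sub_nonpos.2 (hF x ▸ S.le_sup' (l · x) hj)
  have hray : ∀ t > 0, ((t ^ (-(F x)) : ℝ) : ℂ) * (zr t α * pd t α (zr t)) =
      ∑ j ∈ S, t ^ (l j x - F x) • ((j α : ℂ) * ∏ β, b β ^ j β) := by
    intro t ht
    rw [hpd, show f t = _ from funext (hf t), mul_deriv_sum_prod_update_zpow, mul_sum]
    refine sum_congr rfl fun j _ => ?_
    rw [show zr t = _ from funext (hz t), prod_ofReal_rpow_mul_zpow ht, Complex.real_smul, hl,
      sub_sub, Real.rpow_sub ht, Real.rpow_add ht, Real.rpow_neg ht.le, Real.rpow_neg ht.le]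
    push_cast
    field_simp
  rw [hT_eq]
  exact (tendsto_sum_rpow_smul S _ _ hle).congr'
    ((eventually_gt_atTop 0).mono fun t ht => (hray t ht).symm)

/-- With `T = {j ∈ S : l_{v,j}(x) = F_v(x)}`, for every `b ∈ (ℂ∖{0})^{n+1}` and
every index `α`, along the ray `z(t)_α = t^{x_α} b_α` one has
`t^{-F_v(x)} · z(t)_α · ∂f_t/∂z_α(z(t)) → Σ_{j∈T} j_α b^j` as `t → +∞`. -/
theorem rescaled_log_derivative_limit (n : ℕ) (hn : 1 ≤ n)
    (S : Finset (Fin (n + 1) → ℤ)) (hS : S.Nonempty)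
    (v : (Fin (n + 1) → ℤ) → ℝ)
    (l : (Fin (n + 1) → ℤ) → (Fin (n + 1) → ℝ) → ℝ)
    (hl : ∀ j x, l j x = ∑ α, (j α : ℝ) * x α - v j)
    (F : (Fin (n + 1) → ℝ) → ℝ)
    (hF : ∀ x, F x = S.sup' hS (fun j => l j x))
    (f : ℝ → (Fin (n + 1) → ℂ) → ℂ)
    (hf : ∀ t z, f t z = ∑ j ∈ S, ((t ^ (-(v j)) : ℝ) : ℂ) * ∏ α, z α ^ (j α))
    (pd : ℝ → Fin (n + 1) → (Fin (n + 1) → ℂ) → ℂ)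
    (hpd : ∀ t α z, pd t α z = deriv (fun w => f t (Function.update z α w)) (z α))
    (x : Fin (n + 1) → ℝ)
    (T : Finset (Fin (n + 1) → ℤ))
    (hT : ∀ j, j ∈ T ↔ j ∈ S ∧ l j x = F x)
    (b : Fin (n + 1) → ℂ) (hb : ∀ α, b α ≠ 0)
    (zr : ℝ → Fin (n + 1) → ℂ)
    (hz : ∀ t α, zr t α = ((t ^ (x α) : ℝ) : ℂ) * b α)
    (α : Fin (n + 1)) :
    Tendsto (fun t : ℝ => ((t ^ (-(F x)) : ℝ) : ℂ) * (zr t α * pd t α (zr t))) atTop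
      (nhds (∑ j ∈ T, (j α : ℂ) * ∏ β, b β ^ (j β))) :=
  rescaled_log_derivative_limit_general n S hS v l hl F hF f hf pd hpd x T hT b zr hz α
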